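/- arXiv:2407.00823 — 2 statements merged into one kernel-verified Lean document; each statement's English description precedes it below -/
import Mathlib

section
/- Suppose smooth fields satisfy the continuity equation ∂_t ρ + div(ρu) = 0 and the distortion equation ∂_t A_{ik} + ∂_k(u_m A_{im}) + u_j(∂_j A_{ik} - ∂_k A_{ij}) = -E_{A_{ik}}/θ₁, where E_2(A) = (1/4)c_s² G̊_{ij}G̊_{ij} with G = AᵀA, and E_{A_{ik}} = ∂E_2/∂A_{ik}. Then ∂_t(ρE_2) + div(ρE_2 u) = -ρ E_{A_{ik}} A_{im} ∂_k u_m - (ρ/θ₁) E_{A_{ik}} E_{A_{ik}}. -/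
open scoped BigOperators
open Matrix

/-- Space-time points: position in ℝ³ and time. -/
abbrev SpaceTime := (Fin 3 → ℝ) × ℝ

/-- Partial derivative in time of a scalar space-time field. -/
noncomputable def dt (f : SpaceTime → ℝ) (z : SpaceTime) : ℝ := fderiv ℝ f z (0, 1)

/-- Partial derivative in the k-th spatial direction of a scalar space-time field. -/
noncomputable def dx (k : Fin 3) (f : SpaceTime → ℝ) (z : SpaceTime) : ℝ := fderiv ℝ f z (Pi.single k 1, 0)

/-- Metric tensor G = AᵀA. -/
noncomputable def metG (A : Matrix (Fin 3) (Fin 3) ℝ) : Matrix (Fin 3) (Fin 3) ℝ := Aᵀ * A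

/-- Trace-free part of the metric tensor. -/
noncomputable def metG0 (A : Matrix (Fin 3) (Fin 3) ℝ) : Matrix (Fin 3) (Fin 3) ℝ :=
  metG A - (1/3 : ℝ) • trace (metG A) • (1 : Matrix (Fin 3) (Fin 3) ℝ)

/-- Mesoscopic energy E₂(A) = (1/4) c_s² G̊ : G̊. -/
noncomputable def E2 (cs : ℝ) (A : Matrix (Fin 3) (Fin 3) ℝ) : ℝ :=
  (1/4 : ℝ) * cs ^ 2 * ∑ i, ∑ j, metG0 A i j * metG0 A i j

/-- Derivative of E₂ with respect to A: E_{A_{ik}} = c_s² A_{ij} G̊_{jk}. -/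
noncomputable def EA (cs : ℝ) (A : Matrix (Fin 3) (Fin 3) ℝ) (i k : Fin 3) : ℝ :=
  cs ^ 2 * ∑ j, A i j * metG0 A j k


lemma metG0_apply (M : Matrix (Fin 3) (Fin 3) ℝ) (i j : Fin 3) :
    metG0 M i j = (∑ m, M m i * M m j)
      - 1/3 * (∑ p, ∑ m, M m p * M m p) * (if i = j then 1 else 0) := by
  simp [metG0, metG, Matrix.mul_apply, Matrix.sub_apply, Matrix.smul_apply,
    Matrix.one_apply, Matrix.trace, Matrix.diag, Matrix.transpose_apply, smul_eq_mul]

set_option maxHeartbeats 2000000 in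
lemma E2_hasFDerivAt (cs : ℝ) (A : SpaceTime → Matrix (Fin 3) (Fin 3) ℝ)
    (hA : ∀ i k, ContDiff ℝ (⊤ : ℕ∞) (fun z => A z i k)) (z : SpaceTime) :
    HasFDerivAt (fun w => E2 cs (A w))
      (∑ i, ∑ k, EA cs (A z) i k • fderiv ℝ (fun w => A w i k) z) z := by
  have h : ∀ i k, HasFDerivAt (fun w => A w i k) (fderiv ℝ (fun w => A w i k) z) z :=
    fun i k => ((hA i k).differentiable (by simp) z).hasFDerivAt
  set L : Fin 3 → Fin 3 → SpaceTime →L[ℝ] ℝ := fun i k => fderiv ℝ (fun w => A w i k) z with hL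
  have hg : ∀ i j, HasFDerivAt (fun w => ∑ m, A w m i * A w m j)
      (∑ m, (A z m i • L m j + A z m j • L m i)) z :=
    fun i j => HasFDerivAt.fun_sum fun m _ => (h m i).mul (h m j)
  have htr : HasFDerivAt (fun w => ∑ p, ∑ m, A w m p * A w m p)
      (∑ p, ∑ m, (A z m p • L m p + A z m p • L m p)) z :=
    HasFDerivAt.fun_sum fun p _ => hg p p
  have hG0 : ∀ i j, HasFDerivAt
      (fun w => (∑ m, A w m i * A w m j)
        - 1/3 * (∑ p, ∑ m, A w m p * A w m p) * (if i = j then 1 else 0))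
      ((∑ m, (A z m i • L m j + A z m j • L m i))
        - (if i = j then (1:ℝ) else 0) • ((1/3 : ℝ) •
            (∑ p, ∑ m, (A z m p • L m p + A z m p • L m p)))) z :=
    fun i j => (hg i j).sub ((htr.const_mul (1/3)).mul_const _)
  have hfull := HasFDerivAt.const_mul
    (HasFDerivAt.fun_sum (fun i (_ : i ∈ Finset.univ) =>
      HasFDerivAt.fun_sum (fun j (_ : j ∈ Finset.univ) => (hG0 i j).mul (hG0 i j)))) ((1/4:ℝ)*cs^2)
  have heq : (fun w => E2 cs (A w)) = (fun w => (1/4:ℝ)*cs^2 * ∑ i, ∑ j,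
      (((∑ m, A w m i * A w m j)
        - 1/3 * (∑ p, ∑ m, A w m p * A w m p) * (if i = j then 1 else 0)) *
       ((∑ m, A w m i * A w m j)
        - 1/3 * (∑ p, ∑ m, A w m p * A w m p) * (if i = j then 1 else 0)))) := by
    funext w
    simp only [E2, metG0_apply]
  rw [heq]
  refine hfull.congr_fderiv ?_
  refine ContinuousLinearMap.ext fun v => ?_
  simp [ContinuousLinearMap.sum_apply, ContinuousLinearMap.smul_apply,
    ContinuousLinearMap.add_apply, ContinuousLinearMap.sub_apply, ContinuousLinearMap.coe_sub',
    Pi.sub_apply, smul_eq_mul, EA, metG0_apply, Fin.sum_univ_three]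
  ring

set_option maxHeartbeats 2000000 in
theorem mesoscopic_energy_balance
    (cs : ℝ) (ρ θ₁ : SpaceTime → ℝ) (u : SpaceTime → (Fin 3 → ℝ)) (A : SpaceTime → Matrix (Fin 3) (Fin 3) ℝ)
    (hρ : ContDiff ℝ (⊤ : ℕ∞) ρ) (hu : ContDiff ℝ (⊤ : ℕ∞) u) (hθ : ContDiff ℝ (⊤ : ℕ∞) θ₁)
    (hθpos : ∀ z, 0 < θ₁ z)
    (hA : ∀ i k, ContDiff ℝ (⊤ : ℕ∞) (fun z => A z i k))
    -- continuity equation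
    (hcont : ∀ z, dt ρ z + ∑ k, dx k (fun w => ρ w * u w k) z = 0)
    -- distortion field equation
    (hdist : ∀ z, ∀ i, ∀ k, dt (fun w => A w i k) z
        + dx k (fun w => ∑ m, u w m * A w i m) z
        + ∑ j, u z j * (dx j (fun w => A w i k) z - dx k (fun w => A w i j) z)
      = -(EA cs (A z) i k) / θ₁ z) :
    ∀ z, dt (fun w => ρ w * E2 cs (A w)) z
        + ∑ k, dx k (fun w => ρ w * E2 cs (A w) * u w k) z
      = -(ρ z * ∑ i, ∑ k, ∑ m, EA cs (A z) i k * A z i m * dx k (fun w => u w m) z)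
        - (ρ z / θ₁ z) * ∑ i, ∑ k, EA cs (A z) i k * EA cs (A z) i k := by
  intro z
  have hum : ∀ m, ContDiff ℝ (⊤ : ℕ∞) (fun w => u w m) := fun m => contDiff_pi.mp hu m
  have dA : ∀ i k, DifferentiableAt ℝ (fun w => A w i k) z := fun i k => (hA i k).differentiable (by simp) z
  have du : ∀ m, DifferentiableAt ℝ (fun w => u w m) z := fun m => (hum m).differentiable (by simp) z
  have dρ : DifferentiableAt ℝ ρ z := hρ.differentiable (by simp) z
  have hE := E2_hasFDerivAt cs A hA z
  have dE : DifferentiableAt ℝ (fun w => E2 cs (A w)) z := hE.differentiableAt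
  have dρu : ∀ k, DifferentiableAt ℝ (fun w => ρ w * u w k) z := fun k => dρ.mul (du k)
  have he : ∀ v : SpaceTime, fderiv ℝ (fun w => E2 cs (A w)) z v
      = ∑ i, ∑ k, EA cs (A z) i k * fderiv ℝ (fun w => A w i k) z v := by
    intro v
    rw [hE.fderiv]
    simp [ContinuousLinearMap.sum_apply]
  have hmul : ∀ (f g : SpaceTime → ℝ), DifferentiableAt ℝ f z → DifferentiableAt ℝ g z →
      ∀ v : SpaceTime, fderiv ℝ (fun w => f w * g w) z v
        = f z * fderiv ℝ g z v + g z * fderiv ℝ f z v := by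
    intro f g hf hg v
    rw [fderiv_fun_mul hf hg]
    simp
  have key1 : dt (fun w => ρ w * E2 cs (A w)) z
      = ρ z * (∑ i, ∑ k, EA cs (A z) i k * dt (fun w => A w i k) z)
        + E2 cs (A z) * dt ρ z := by
    simp only [dt]
    rw [hmul _ _ dρ dE, he]
  have key2 : ∀ k, dx k (fun w => ρ w * E2 cs (A w) * u w k) z
      = ρ z * u z k * (∑ i, ∑ k', EA cs (A z) i k' * dx k (fun w => A w i k') z)
        + E2 cs (A z) * dx k (fun w => ρ w * u w k) z := by
    intro k
    have hfeq : (fun w => ρ w * E2 cs (A w) * u w k)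
        = (fun w => (ρ w * u w k) * E2 cs (A w)) := by funext w; ring
    simp only [dx]
    rw [hfeq, hmul _ _ (dρu k) dE, he]
  have key3 : ∀ i k, dx k (fun w => ∑ m, u w m * A w i m) z
      = ∑ m, (u z m * dx k (fun w => A w i m) z + A z i m * dx k (fun w => u w m) z) := by
    intro i k
    simp only [dx]
    rw [fderiv_fun_sum (fun m _ => (du m).fun_mul (dA i m))]
    simp only [ContinuousLinearMap.sum_apply]
    refine Finset.sum_congr rfl fun m _ => ?_
    rw [fderiv_fun_mul (du m) (dA i m)]
    simp
  have hd : ∀ i k, dt (fun w => A w i k) z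
      + (∑ m, (u z m * dx k (fun w => A w i m) z + A z i m * dx k (fun w => u w m) z))
      + ∑ j, u z j * (dx j (fun w => A w i k) z - dx k (fun w => A w i j) z)
      = -(EA cs (A z) i k) / θ₁ z := by
    intro i k
    have h := hdist z i k
    rwa [key3] at h
  have hc := hcont z
  have hsum2 : (∑ k, dx k (fun w => ρ w * E2 cs (A w) * u w k) z)
      = ∑ k, (ρ z * u z k * (∑ i, ∑ k', EA cs (A z) i k' * dx k (fun w => A w i k') z)
        + E2 cs (A z) * dx k (fun w => ρ w * u w k) z) :=
    Finset.sum_congr rfl fun k _ => key2 k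
  rw [key1, hsum2]
  simp only [Fin.sum_univ_three] at hc hd ⊢
  linear_combination (E2 cs (A z)) * hc
    + (ρ z * EA cs (A z) 0 0) * hd 0 0 + (ρ z * EA cs (A z) 0 1) * hd 0 1
    + (ρ z * EA cs (A z) 0 2) * hd 0 2 + (ρ z * EA cs (A z) 1 0) * hd 1 0
    + (ρ z * EA cs (A z) 1 1) * hd 1 1 + (ρ z * EA cs (A z) 1 2) * hd 1 2
    + (ρ z * EA cs (A z) 2 0) * hd 2 0 + (ρ z * EA cs (A z) 2 1) * hd 2 1
    + (ρ z * EA cs (A z) 2 2) * hd 2 2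
end

section
/- Suppose smooth fields satisfy ∂_t ρ + div(ρu) = 0 and the heat-flux equation ∂_t J_k + ∂_k(J_m u_m) + ∂_k T + u_j(∂_j J_k - ∂_k J_j) = -E_{J_k}/θ₂, where E_3(J) = (1/2)c_h² J_i J_i and E_{J_k} = c_h² J_k. Then ∂_t(ρE_3) + div(ρE_3 u) = -ρ E_{J_k} J_m ∂_k u_m - ρ E_{J_k} ∂_k T - (ρ/θ₂) E_{J_k} E_{J_k}. -/
open scoped BigOperators

lemma fd_mul (f g : SpaceTime → ℝ) (z v : SpaceTime)
    (hf : DifferentiableAt ℝ f z) (hg : DifferentiableAt ℝ g z) :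
    fderiv ℝ (fun w => f w * g w) z v = fderiv ℝ f z v * g z + f z * fderiv ℝ g z v := by
  rw [fderiv_fun_mul hf hg]
  simp [ContinuousLinearMap.add_apply, ContinuousLinearMap.smul_apply, smul_eq_mul]
  ring

lemma fd_sum3 (f : Fin 3 → SpaceTime → ℝ) (z v : SpaceTime)
    (hf : ∀ i, DifferentiableAt ℝ (f i) z) :
    fderiv ℝ (fun w => ∑ i, f i w) z v = ∑ i, fderiv ℝ (f i) z v := by
  rw [fderiv_fun_sum (fun i _ => hf i)]
  simp [ContinuousLinearMap.sum_apply]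

lemma fd_E (ch : ℝ) (J : SpaceTime → Fin 3 → ℝ) (hJ : Differentiable ℝ J) (z v : SpaceTime) :
    fderiv ℝ (fun w => (1/2 : ℝ) * ch ^ 2 * ∑ i, J w i * J w i) z v
      = ch ^ 2 * ∑ i, J z i * fderiv ℝ (fun w => J w i) z v := by
  have hJk : ∀ i : Fin 3, Differentiable ℝ (fun w => J w i) := fun i => differentiable_pi.mp hJ i
  have hs : DifferentiableAt ℝ (fun w => ∑ i : Fin 3, J w i * J w i) z := by
    exact (Differentiable.fun_sum (fun i _ => ((hJk i).mul (hJk i)))).differentiableAt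
  rw [show (fun w => (1/2 : ℝ) * ch ^ 2 * ∑ i, J w i * J w i)
      = fun w => ((1/2 : ℝ) * ch ^ 2) * (fun w => ∑ i : Fin 3, J w i * J w i) w from rfl,
    fderiv_const_mul hs]
  simp only [ContinuousLinearMap.smul_apply, smul_eq_mul]
  rw [fd_sum3 (fun i w => J w i * J w i) z v
      (fun i => ((hJk i).mul (hJk i)).differentiableAt)]
  rw [Finset.sum_congr rfl (fun i _ => fd_mul (fun w => J w i) (fun w => J w i) z v
      (hJk i).differentiableAt (hJk i).differentiableAt)]
  rw [Finset.mul_sum, Finset.mul_sum]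
  refine Finset.sum_congr rfl (fun i _ => by ring)

theorem heat_flux_energy_balance
    (ch : ℝ) (ρ T θ₂ : SpaceTime → ℝ) (u J : SpaceTime → (Fin 3 → ℝ))
    (hρ : ContDiff ℝ (⊤ : ℕ∞) ρ) (hu : ContDiff ℝ (⊤ : ℕ∞) u) (hJ : ContDiff ℝ (⊤ : ℕ∞) J)
    (hT : ContDiff ℝ (⊤ : ℕ∞) T) (hθ : ContDiff ℝ (⊤ : ℕ∞) θ₂) (hθpos : ∀ z, 0 < θ₂ z)
    -- continuity equation
    (hcont : ∀ z, dt ρ z + ∑ k, dx k (fun w => ρ w * u w k) z = 0)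
    -- heat-flux equation, with E_{J_k} = c_h² J_k
    (hheat : ∀ z, ∀ k : Fin 3, dt (fun w => J w k) z
        + dx k (fun w => ∑ m, J w m * u w m) z
        + dx k T z
        + ∑ j, u z j * (dx j (fun w => J w k) z - dx k (fun w => J w j) z)
      = -(ch ^ 2 * J z k) / θ₂ z) :
    -- balance law for E₃ = (1/2) c_h² J_i J_i
    ∀ z, dt (fun w => ρ w * ((1/2 : ℝ) * ch ^ 2 * ∑ i, J w i * J w i)) z
        + ∑ k, dx k (fun w => ρ w * ((1/2 : ℝ) * ch ^ 2 * ∑ i, J w i * J w i) * u w k) z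
      = -(ρ z * ∑ k, ∑ m, (ch ^ 2 * J z k) * J z m * dx k (fun w => u w m) z)
        - (ρ z * ∑ k, (ch ^ 2 * J z k) * dx k T z)
        - (ρ z / θ₂ z) * ∑ k, (ch ^ 2 * J z k) * (ch ^ 2 * J z k) := by
  intro z
  have hρd : Differentiable ℝ ρ := hρ.differentiable (by simp)
  have hud : Differentiable ℝ u := hu.differentiable (by simp)
  have hJd : Differentiable ℝ J := hJ.differentiable (by simp)
  have hJk : ∀ i : Fin 3, Differentiable ℝ (fun w => J w i) := fun i => differentiable_pi.mp hJd i
  have huk : ∀ i : Fin 3, Differentiable ℝ (fun w => u w i) := fun i => differentiable_pi.mp hud i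
  have hEd : Differentiable ℝ (fun w => (1/2 : ℝ) * ch ^ 2 * ∑ i, J w i * J w i) :=
    Differentiable.const_mul (Differentiable.fun_sum (fun i _ => (hJk i).mul (hJk i))) _
  -- directional derivative of ρ * E
  have fd_ρE : ∀ v : SpaceTime,
      fderiv ℝ (fun w => ρ w * ((1/2 : ℝ) * ch ^ 2 * ∑ i, J w i * J w i)) z v
        = fderiv ℝ ρ z v * ((1/2 : ℝ) * ch ^ 2 * ∑ i, J z i * J z i)
          + ρ z * (ch ^ 2 * ∑ i, J z i * fderiv ℝ (fun w => J w i) z v) := by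
    intro v
    rw [fd_mul ρ _ z v hρd.differentiableAt hEd.differentiableAt, fd_E ch J hJd z v]
  have h1 : dt (fun w => ρ w * ((1/2 : ℝ) * ch ^ 2 * ∑ i, J w i * J w i)) z
      = dt ρ z * ((1/2 : ℝ) * ch ^ 2 * ∑ i, J z i * J z i)
        + ρ z * (ch ^ 2 * ∑ i, J z i * dt (fun w => J w i) z) := fd_ρE (0, 1)
  have h2 : ∀ k : Fin 3,
      dx k (fun w => ρ w * ((1/2 : ℝ) * ch ^ 2 * ∑ i, J w i * J w i) * u w k) z
      = (dx k ρ z * ((1/2 : ℝ) * ch ^ 2 * ∑ i, J z i * J z i)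
          + ρ z * (ch ^ 2 * ∑ i, J z i * dx k (fun w => J w i) z)) * u z k
        + (ρ z * ((1/2 : ℝ) * ch ^ 2 * ∑ i, J z i * J z i)) * dx k (fun w => u w k) z := by
    intro k
    have := fd_mul (fun w => ρ w * ((1/2 : ℝ) * ch ^ 2 * ∑ i, J w i * J w i))
      (fun w => u w k) z (Pi.single k 1, 0)
      (hρd.mul hEd).differentiableAt (huk k).differentiableAt
    rw [show dx k (fun w => ρ w * ((1/2 : ℝ) * ch ^ 2 * ∑ i, J w i * J w i) * u w k) z
        = fderiv ℝ (fun w => (fun w => ρ w * ((1/2 : ℝ) * ch ^ 2 * ∑ i, J w i * J w i)) w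
            * (fun w => u w k) w) z (Pi.single k 1, 0) from rfl, this,
      fd_ρE (Pi.single k 1, 0)]
    rfl
  have h3 : ∀ k : Fin 3, dx k (fun w => ρ w * u w k) z
      = dx k ρ z * u z k + ρ z * dx k (fun w => u w k) z := fun k =>
    fd_mul ρ (fun w => u w k) z _ hρd.differentiableAt (huk k).differentiableAt
  have h4 : ∀ k : Fin 3, dx k (fun w => ∑ m, J w m * u w m) z
      = ∑ m, (dx k (fun w => J w m) z * u z m + J z m * dx k (fun w => u w m) z) := by
    intro k
    rw [show dx k (fun w => ∑ m, J w m * u w m) z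
        = fderiv ℝ (fun w => ∑ m, (fun m w => J w m * u w m) m w) z (Pi.single k 1, 0) from rfl,
      fd_sum3 (fun m w => J w m * u w m) z _ (fun m => ((hJk m).mul (huk m)).differentiableAt)]
    exact Finset.sum_congr rfl (fun m _ =>
      fd_mul (fun w => J w m) (fun w => u w m) z _
        (hJk m).differentiableAt (huk m).differentiableAt)
  have hc := hcont z
  simp only [h3] at hc
  have hh : ∀ k : Fin 3, dt (fun w => J w k) z
      + (∑ m, (dx k (fun w => J w m) z * u z m + J z m * dx k (fun w => u w m) z))
      + dx k T z
      + ∑ j, u z j * (dx j (fun w => J w k) z - dx k (fun w => J w j) z)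
      = -(ch ^ 2 * J z k) / θ₂ z := by
    intro k
    have := hheat z k
    rwa [h4 k] at this
  rw [h1]
  rw [Finset.sum_congr rfl (fun k _ => h2 k)]
  have h0' := hh 0
  have h1' := hh 1
  have h2' := hh 2
  simp only [Fin.sum_univ_three] at hc h0' h1' h2' ⊢
  linear_combination ((1/2 : ℝ) * ch ^ 2 * (J z 0 * J z 0 + J z 1 * J z 1 + J z 2 * J z 2)) * hc
    + (ρ z * ch ^ 2 * J z 0) * h0'
    + (ρ z * ch ^ 2 * J z 1) * h1'
    + (ρ z * ch ^ 2 * J z 2) * h2'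
end
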